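/- The set D = {d₁(u)·d₂(v) : u, v ∈ ℝ}, where d₁(u) = (cos u, sin u, 0, 0) and d₂(v) = (0, cos v, 0, sin v) and · is quaternion multiplication, is mapped onto the Clifford torus C = {x ∈ ℝ⁴ : x₀² + x₂² = 1/2, x₁² + x₃² = 1/2} by left multiplication with the unit quaternion Q = (1/2, 1/2, 1/2, 1/2); i.e., Q·D = C. -/

import Mathlib

open Real Set

/-- For any point on the unit circle there is an angle realizing it. -/
lemma exists_angle (a b : ℝ) (h : a ^ 2 + b ^ 2 = 1) :
    ∃ θ : ℝ, Real.cos θ = a ∧ Real.sin θ = b := by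
  have hz : (⟨a, b⟩ : ℂ) ≠ 0 := by
    intro hzero
    rw [Complex.ext_iff] at hzero
    simp at hzero
    obtain ⟨ha, hb⟩ := hzero
    rw [ha, hb] at h; norm_num at h
  have habs : ‖(⟨a, b⟩ : ℂ)‖ = 1 := by
    rw [Complex.norm_def, Complex.normSq_mk]
    rw [show a * a + b * b = 1 by nlinarith]
    exact Real.sqrt_one
  refine ⟨Complex.arg ⟨a, b⟩, ?_, ?_⟩
  · rw [Complex.cos_arg hz, habs]; simp
  · rw [Complex.sin_arg, habs]; simp

/-- Key decomposition lemma: a rank-one unit 2×2 matrix comes from two angles. -/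
lemma key (y0 y1 y2 y3 : ℝ) (hdet : y0 * y3 = y1 * y2)
    (hnorm : y0 ^ 2 + y1 ^ 2 + y2 ^ 2 + y3 ^ 2 = 1) :
    ∃ u v : ℝ, y0 = -(Real.sin u * Real.cos v) ∧ y1 = Real.cos u * Real.cos v ∧
      y2 = -(Real.sin u * Real.sin v) ∧ y3 = Real.cos u * Real.sin v := by
  set r := Real.sqrt (y0 ^ 2 + y1 ^ 2) with hr
  have hrnn : 0 ≤ r := Real.sqrt_nonneg _
  have hrsq : r ^ 2 = y0 ^ 2 + y1 ^ 2 := Real.sq_sqrt (by positivity)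
  by_cases h0 : r = 0
  · -- y0 = y1 = 0
    have h00 : y0 ^ 2 + y1 ^ 2 = 0 := by rw [← hrsq, h0]; ring
    have hy0 : y0 = 0 := by nlinarith [sq_nonneg y0, sq_nonneg y1]
    have hy1 : y1 = 0 := by nlinarith [sq_nonneg y0, sq_nonneg y1]
    obtain ⟨u, hcu, hsu⟩ := exists_angle y3 (-y2) (by nlinarith)
    refine ⟨u, Real.pi / 2, ?_, ?_, ?_, ?_⟩ <;>
      simp [Real.cos_pi_div_two, Real.sin_pi_div_two, hy0, hy1, hcu, hsu] <;> linarith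
  · have hrpos : 0 < r := lt_of_le_of_ne hrnn (Ne.symm h0)
    obtain ⟨u, hcu, hsu⟩ := exists_angle (y1 / r) (-(y0 / r)) (by
      field_simp
      nlinarith [hrsq])
    have huv : Real.sin u ^ 2 + Real.cos u ^ 2 = 1 := Real.sin_sq_add_cos_sq u
    have hC : Real.cos u * r = y1 := by rw [hcu]; field_simp
    have hS : Real.sin u * r = -y0 := by rw [hsu]; field_simp
    -- orthogonality: cos u * y2 + sin u * y3 = 0
    have horth : Real.cos u * y2 + Real.sin u * y3 = 0 := by
      have : (Real.cos u * y2 + Real.sin u * y3) * r = 0 := by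
        have : (Real.cos u * r) * y2 + (Real.sin u * r) * y3 = y1 * y2 - y0 * y3 := by
          rw [hC, hS]; ring
        nlinarith [this, hdet]
      exact (mul_eq_zero.mp this).resolve_right h0
    set t := Real.cos u * y3 - Real.sin u * y2 with ht
    have htsq : t ^ 2 = y2 ^ 2 + y3 ^ 2 := by
      rw [ht]
      linear_combination (y2 ^ 2 + y3 ^ 2) * huv -
        (Real.cos u * y2 + Real.sin u * y3) * horth
    obtain ⟨v, hcv, hsv⟩ := exists_angle r t (by rw [hrsq, htsq]; linarith)
    refine ⟨u, v, ?_, ?_, ?_, ?_⟩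
    · rw [hcv]; nlinarith [hS]
    · rw [hcv]; nlinarith [hC]
    · rw [hsv, ht]; linear_combination (-y2) * huv + Real.cos u * horth
    · rw [hsv, ht]; linear_combination (-y3) * huv + Real.sin u * horth

/-- Left multiplication by the unit quaternion `Q = (1/2, 1/2, 1/2, 1/2)` maps
the Minkowski product `D` of the two circles `d₁, d₂` onto the Clifford torus
`C = {x : x₀² + x₂² = 1/2 ∧ x₁² + x₃² = 1/2}`. -/
theorem left_mul_maps_product_torus_to_clifford_torus :
    let d₁ : ℝ → Quaternion ℝ := fun u => ⟨Real.cos u, Real.sin u, 0, 0⟩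
    let d₂ : ℝ → Quaternion ℝ := fun v => ⟨0, Real.cos v, 0, Real.sin v⟩
    let D : Set (Quaternion ℝ) := {x | ∃ u v : ℝ, x = d₁ u * d₂ v}
    let Q : Quaternion ℝ := ⟨1/2, 1/2, 1/2, 1/2⟩
    let C : Set (Quaternion ℝ) :=
      {x | x.re ^ 2 + x.imJ ^ 2 = 1 / 2 ∧ x.imI ^ 2 + x.imK ^ 2 = 1 / 2}
    (fun x => Q * x) '' D = C := by
  intro d₁ d₂ D Q C
  ext x
  simp only [mem_image, mem_setOf_eq]
  constructor
  · rintro ⟨y, ⟨u, v, rfl⟩, rfl⟩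
    have hu := Real.sin_sq_add_cos_sq u
    have hv := Real.sin_sq_add_cos_sq v
    have hprod : Q * (d₁ u * d₂ v) =
        ⟨(-(Real.sin u * Real.cos v) - Real.cos u * Real.cos v + Real.sin u * Real.sin v
            - Real.cos u * Real.sin v) / 2,
          (-(Real.sin u * Real.cos v) + Real.cos u * Real.cos v + Real.sin u * Real.sin v
            + Real.cos u * Real.sin v) / 2,
          (-(Real.sin u * Real.cos v) + Real.cos u * Real.cos v - Real.sin u * Real.sin v
            - Real.cos u * Real.sin v) / 2,
          (-(Real.sin u * Real.cos v) - Real.cos u * Real.cos v - Real.sin u * Real.sin v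
            + Real.cos u * Real.sin v) / 2⟩ := by
      ext <;> simp only [Quaternion.re_mul, Quaternion.imI_mul, Quaternion.imJ_mul,
        Quaternion.imK_mul] <;> simp [d₁, d₂, Q] <;> ring
    rw [hprod]
    constructor
    · show _ = (1:ℝ)/2
      ring_nf
      linear_combination ((Real.cos v ^ 2 + Real.sin v ^ 2) / 2) * hu + (1 / 2) * hv
    · show _ = (1:ℝ)/2
      ring_nf
      linear_combination ((Real.cos v ^ 2 + Real.sin v ^ 2) / 2) * hu + (1 / 2) * hv
  · rintro ⟨h1, h2⟩
    set a := x.re; set b := x.imI; set c := x.imJ; set d := x.imK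
    set y0 := (a + b + c + d) / 2 with hy0
    set y1 := (b - a - d + c) / 2 with hy1
    set y2 := (c + d - a - b) / 2 with hy2
    set y3 := (d - c + b - a) / 2 with hy3
    obtain ⟨u, v, e0, e1, e2, e3⟩ := key y0 y1 y2 y3 (by rw [hy0, hy1, hy2, hy3]; nlinarith)
      (by rw [hy0, hy1, hy2, hy3]; nlinarith)
    refine ⟨d₁ u * d₂ v, ⟨u, v, rfl⟩, ?_⟩
    have hP : d₁ u * d₂ v = ⟨y0, y1, y2, y3⟩ := by
      ext <;> simp only [Quaternion.re_mul, Quaternion.imI_mul, Quaternion.imJ_mul,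
        Quaternion.imK_mul] <;> simp [d₁, d₂] <;> [rw [e0]; rw [e1]; rw [e2]; rw [e3]] <;> ring
    generalize d₁ u * d₂ v = P at hP ⊢
    ext <;> simp only [Quaternion.re_mul, Quaternion.imI_mul, Quaternion.imJ_mul,
      Quaternion.imK_mul] <;> simp [Q, hP, hy0, hy1, hy2, hy3] <;> ring
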